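/- In the semantics where states are functions f : A⁺ → {T,F} satisfying f(σaa) = f(σa) for all atoms a and strings σ ∈ A*, the axiom scheme (CPrp1): (x ◁ a ▷ y) ◁ a ▷ z = (x ◁ a ▷ x) ◁ a ▷ z is sound, i.e., both sides have the same reply and the same state transformation on every such state. -/

import Mathlib

inductive CE (A : Type) : Type
  | tt : CE A
  | ff : CE A
  | atom : A → CE A
  | cond : CE A → CE A → CE A → CE A

/-- Nonempty strings of atoms (A⁺). -/
def NEStr (A : Type) := {l : List A // l ≠ []}

/-- States: valuation functions f : A⁺ → {T,F}. -/
def StateF (A : Type) := NEStr A → Bool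

mutual
/-- The reply `t ! f` of a conditional expression in state `f`. -/
def reply {A : Type} : CE A → StateF A → Bool
  | .tt, _ => true
  | .ff, _ => false
  | .atom a, f => f ⟨[a], by simp⟩
  | .cond x y z, f => if reply y f then reply x (applyCE y f) else reply z (applyCE y f)

/-- The state transformation `t • f` of a conditional expression. -/
def applyCE {A : Type} : CE A → StateF A → StateF A
  | .tt, f => f
  | .ff, f => f
  | .atom a, f => fun σ => f ⟨a :: σ.1, by simp⟩
  | .cond x y z, f => if reply y f then applyCE x (applyCE y f) else applyCE z (applyCE y f)
end

/-- Repetition-proof states: f(σaa) = f(σa) for all atoms a and strings σ. -/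
def RPset (A : Type) : Set (StateF A) :=
  {f | ∀ (σ : List A) (a : A), f ⟨σ ++ [a, a], by simp⟩ = f ⟨σ ++ [a], by simp⟩}

/-! In a repetition-proof state the reply to `a` is unchanged by applying `a` itself, so after the outer
test on `a` has answered `T` the inner test on `a` answers `T` as well, and the inner right branch is
never taken. -/

section

variable {A : Type}

theorem reply_atom_applyCE_atom {f : StateF A} (hf : f ∈ RPset A) (a : A) :
    reply (.atom a) (applyCE (.atom a) f) = reply (.atom a) f :=
  hf [] a

theorem reply_cond_of_reply_eq_true {y : CE A} {f : StateF A} (h : reply y f = true) (x z : CE A) :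
    reply (.cond x y z) f = reply x (applyCE y f) := by
  simp only [reply, h, if_true]

theorem applyCE_cond_of_reply_eq_true {y : CE A} {f : StateF A} (h : reply y f = true)
    (x z : CE A) : applyCE (.cond x y z) f = applyCE x (applyCE y f) := by
  simp only [applyCE, h, if_true]

theorem reply_cond_of_reply_eq_false {y : CE A} {f : StateF A} (h : reply y f = false)
    (x z : CE A) : reply (.cond x y z) f = reply z (applyCE y f) := by
  simp only [reply, h, Bool.false_eq_true, if_false]

theorem applyCE_cond_of_reply_eq_false {y : CE A} {f : StateF A} (h : reply y f = false)
    (x z : CE A) : applyCE (.cond x y z) f = applyCE z (applyCE y f) := by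
  simp only [applyCE, h, Bool.false_eq_true, if_false]

end

/-- Soundness of (CPrp1) on repetition-proof states: both sides have the same
reply and the same state transformation. -/
theorem cprp1_sound (A : Type) (f : StateF A) (hf : f ∈ RPset A) (a : A) (x y z : CE A) :
    reply (.cond (.cond x (.atom a) y) (.atom a) z) f =
      reply (.cond (.cond x (.atom a) x) (.atom a) z) f ∧
    applyCE (.cond (.cond x (.atom a) y) (.atom a) z) f =
      applyCE (.cond (.cond x (.atom a) x) (.atom a) z) f := by
  cases ha : reply (.atom a) f
  · simp only [reply_cond_of_reply_eq_false ha, applyCE_cond_of_reply_eq_false ha, and_self]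
  · have ha' : reply (.atom a) (applyCE (.atom a) f) = true :=
      (reply_atom_applyCE_atom hf a).trans ha
    simp only [reply_cond_of_reply_eq_true ha, applyCE_cond_of_reply_eq_true ha,
      reply_cond_of_reply_eq_true ha', applyCE_cond_of_reply_eq_true ha', and_self]
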